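/- arXiv:1803.04681 — 14 statements merged into one kernel-verified Lean document; each statement's English description precedes it below -/
import Mathlib

section
/- Let G be a finitely generated group, H a group, and φ : G → H an injective group homomorphism (so that H is a G-group). If H is 1-equationally Artinian, then H is G-equationally Artinian. -/
/-- The coefficient-free radical `Rad₁(E)` of a subset `E ⊆ Hⁿ`. -/
def Rad1 (H : Type*) [Group H] {n : ℕ} (E : Set (Fin n → H)) : Set (FreeGroup (Fin n)) :=
  {w | ∀ e ∈ E, FreeGroup.lift e w = 1}

/-- The `G`-radical `Rad_G(E)` of a subset `E ⊆ Hⁿ`, relative to the embedding `φ : G → H`. -/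
def RadG {G H : Type*} [Group G] [Group H] (φ : G →* H) {n : ℕ} (E : Set (Fin n → H)) :
    Set (Monoid.Coprod G (FreeGroup (Fin n))) :=
  {w | ∀ e ∈ E, Monoid.Coprod.lift φ (FreeGroup.lift e) w = 1}

/-!
Choose a surjection `π : F(y₁, …, yₘ) → G`. Sending `xᵢ ↦ xᵢ` and `yⱼ ↦ π(yⱼ)` gives a
surjection `χ : F(x₁, …, xₙ, y₁, …, yₘ) → G ∗ F(x₁, …, xₙ)`, and evaluating `χ(v)` at
`e ∈ Hⁿ` is evaluating the coefficient-free word `v` at `(e, φ(π y))` in `Hⁿ⁺ᵐ`. Hence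
`χ⁻¹(Rad_G(E)) = Rad₁(E')` with `E' = {(e, φ(π y)) | e ∈ E}`, and since `χ` is surjective,
`Rad_G(E₀) = Rad_G(E)` as soon as `Rad₁(E₀') = Rad₁(E')`. A finite `E₀' ⊆ E'` as given by
1-equational Artinianity is the image of a finite `E₀ ⊆ E`.
-/

open Monoid.Coprod

theorem Group.FG.exists_surjective_freeGroup_fin {G : Type*} [Group G] (hG : Group.FG G) :
    ∃ (m : ℕ) (π : FreeGroup (Fin m) →* G), Function.Surjective π := by
  obtain ⟨α, _, π, hπ⟩ := Group.fg_iff_exists_freeGroup_hom_surjective_finite.mp hG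
  obtain ⟨m, ⟨σ⟩⟩ := Finite.exists_equiv_fin α
  exact ⟨m, π.comp (FreeGroup.freeGroupCongr σ).symm,
    hπ.comp (FreeGroup.freeGroupCongr σ).symm.surjective⟩

section AppendToCoprod

variable {G H : Type*} [Group G] [Group H] {n m : ℕ} (π : FreeGroup (Fin m) →* G)

def freeGroupAppendToCoprod : FreeGroup (Fin (n + m)) →* G ∗ FreeGroup (Fin n) :=
  FreeGroup.lift (Fin.append (fun i => inr (FreeGroup.of i)) (fun j => inl (π (FreeGroup.of j))))

theorem freeGroupAppendToCoprod_comp_map_castAdd :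
    (freeGroupAppendToCoprod π).comp (FreeGroup.map (Fin.castAdd m)) =
      (inr : FreeGroup (Fin n) →* G ∗ FreeGroup (Fin n)) :=
  FreeGroup.ext_hom _ _ fun i => by simp [freeGroupAppendToCoprod]

theorem freeGroupAppendToCoprod_comp_map_natAdd :
    (freeGroupAppendToCoprod π).comp (FreeGroup.map (Fin.natAdd n)) =
      (inl : G →* G ∗ FreeGroup (Fin n)).comp π :=
  FreeGroup.ext_hom _ _ fun j => by simp [freeGroupAppendToCoprod]

theorem freeGroupAppendToCoprod_surjective (hπ : Function.Surjective π) :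
    Function.Surjective (freeGroupAppendToCoprod (n := n) π) := by
  have hinl : (inl : G →* G ∗ FreeGroup (Fin n)).range ≤ (freeGroupAppendToCoprod π).range := by
    rintro _ ⟨g, rfl⟩
    obtain ⟨w, rfl⟩ := hπ g
    exact ⟨_, DFunLike.congr_fun (freeGroupAppendToCoprod_comp_map_natAdd π) w⟩
  have hinr : (inr : FreeGroup (Fin n) →* G ∗ FreeGroup (Fin n)).range ≤
      (freeGroupAppendToCoprod π).range := by
    rintro _ ⟨w, rfl⟩
    exact ⟨_, DFunLike.congr_fun (freeGroupAppendToCoprod_comp_map_castAdd π) w⟩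
  rw [← MonoidHom.range_eq_top, eq_top_iff, ← range_inl_sup_range_inr]
  exact sup_le hinl hinr

theorem lift_comp_freeGroupAppendToCoprod (φ : G →* H) (e : Fin n → H) :
    (lift φ (FreeGroup.lift e)).comp (freeGroupAppendToCoprod π) =
      FreeGroup.lift (Fin.append e fun j => φ (π (FreeGroup.of j))) := by
  refine FreeGroup.ext_hom _ _ fun i => ?_
  induction i using Fin.addCases <;> simp [freeGroupAppendToCoprod]

theorem preimage_radG_freeGroupAppendToCoprod (φ : G →* H) (E : Set (Fin n → H)) :
    freeGroupAppendToCoprod π ⁻¹' RadG φ E =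
      Rad1 H ((fun e => Fin.append e fun j => φ (π (FreeGroup.of j))) '' E) := by
  ext v
  simp only [Set.mem_preimage, RadG, Rad1, Set.mem_ofPred_eq, Set.forall_mem_image,
    ← lift_comp_freeGroupAppendToCoprod, MonoidHom.comp_apply]

theorem radG_eq_radG_iff_rad1_eq_rad1 (hπ : Function.Surjective π) (φ : G →* H)
    (E₀ E : Set (Fin n → H)) :
    RadG φ E₀ = RadG φ E ↔
      Rad1 H ((fun e => Fin.append e fun j => φ (π (FreeGroup.of j))) '' E₀) =
        Rad1 H ((fun e => Fin.append e fun j => φ (π (FreeGroup.of j))) '' E) := by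
  rw [← preimage_radG_freeGroupAppendToCoprod, ← preimage_radG_freeGroupAppendToCoprod,
    (Set.preimage_injective.mpr (freeGroupAppendToCoprod_surjective π hπ)).eq_iff]

end AppendToCoprod

theorem fg_oneEqArtinian_to_GEqArtinian_general {G H : Type*} [Group G] [Group H]
    (hG : Group.FG G) (φ : G →* H)
    (h1 : ∀ (n : ℕ) (E : Set (Fin n → H)), ∃ E₀ ⊆ E, E₀.Finite ∧ Rad1 H E₀ = Rad1 H E) :
    ∀ (n : ℕ) (E : Set (Fin n → H)), ∃ E₀ ⊆ E, E₀.Finite ∧ RadG φ E₀ = RadG φ E := by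
  intro n E
  obtain ⟨m, π, hπ⟩ := hG.exists_surjective_freeGroup_fin
  obtain ⟨E₀, hE₀E, hE₀, hrad⟩ := Set.exists_subset_image_finite_and.mp
    (h1 (n + m) ((fun e => Fin.append e fun j => φ (π (FreeGroup.of j))) '' E))
  exact ⟨E₀, hE₀E, hE₀, (radG_eq_radG_iff_rad1_eq_rad1 π hπ φ E₀ E).mpr hrad⟩

/-- If `G` is finitely generated and the `G`-group `H` is 1-equationally Artinian, then
`H` is `G`-equationally Artinian. -/
theorem fg_oneEqArtinian_to_GEqArtinian {G H : Type*} [Group G] [Group H]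
    (hG : Group.FG G) (φ : G →* H) (hφ : Function.Injective φ)
    (h1 : ∀ (n : ℕ) (E : Set (Fin n → H)), ∃ E₀ ⊆ E, E₀.Finite ∧ Rad1 H E₀ = Rad1 H E) :
    ∀ (n : ℕ) (E : Set (Fin n → H)), ∃ E₀ ⊆ E, E₀.Finite ∧ RadG φ E₀ = RadG φ E :=
  fg_oneEqArtinian_to_GEqArtinian_general hG φ h1
end

section
/- Every finitely generated group that is 1-equationally Artinian is equationally Artinian (in the Diophantine sense, with coefficients from the group itself). -/
/-- The Diophantine radical `Rad_H(E)` of a subset `E ⊆ Hⁿ` (coefficients from `H` itself). -/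
def RadH (H : Type*) [Group H] {n : ℕ} (E : Set (Fin n → H)) :
    Set (Monoid.Coprod H (FreeGroup (Fin n))) :=
  {w | ∀ e ∈ E, Monoid.Coprod.lift (MonoidHom.id H) (FreeGroup.lift e) w = 1}

open Monoid

theorem Fin.append_right_injective {α : Type*} {m n : ℕ} (u : Fin m → α) :
    Function.Injective (Fin.append u : (Fin n → α) → Fin (m + n) → α) := fun _ _ h =>
  funext fun j => by simpa only [Fin.append_right] using congrFun h (Fin.natAdd m j)

section CoeffSubst

variable {H : Type*} [Group H] {m : ℕ} (g : Fin m → H) (n : ℕ)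

noncomputable def coeffSubst : FreeGroup (Fin (m + n)) →* Coprod H (FreeGroup (Fin n)) :=
  FreeGroup.lift (Fin.append (fun i => Coprod.inl (g i)) (fun j => Coprod.inr (FreeGroup.of j)))

theorem coprodLift_comp_coeffSubst (e : Fin n → H) :
    (Coprod.lift (MonoidHom.id H) (FreeGroup.lift e)).comp (coeffSubst g n) =
      FreeGroup.lift (Fin.append g e) := by
  ext i
  refine Fin.addCases (fun i => ?_) (fun j => ?_) i <;>
    simp [coeffSubst, Fin.append_left, Fin.append_right]

theorem preimage_coeffSubst_radH (E : Set (Fin n → H)) :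
    coeffSubst g n ⁻¹' RadH H E = Rad1 H (Fin.append g '' E) := by
  ext w
  simp only [Set.mem_preimage, RadH, Rad1, Set.mem_ofPred_eq, Set.forall_mem_image,
    ← coprodLift_comp_coeffSubst, MonoidHom.comp_apply]

variable {g} in
theorem coeffSubst_surjective (hg : Subgroup.closure (Set.range g) = ⊤) :
    Function.Surjective (coeffSubst g n) := by
  rw [← MonoidHom.range_eq_top, eq_top_iff, ← Coprod.range_inl_sup_range_inr, sup_le_iff]
  constructor
  · rw [MonoidHom.range_eq_map, ← hg, MonoidHom.map_closure, Subgroup.closure_le]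
    rintro _ ⟨_, ⟨i, rfl⟩, rfl⟩
    exact ⟨FreeGroup.of (Fin.castAdd n i), by simp [coeffSubst, Fin.append_left]⟩
  · rw [MonoidHom.range_eq_map, ← FreeGroup.closure_range_of, MonoidHom.map_closure,
      Subgroup.closure_le]
    rintro _ ⟨_, ⟨j, rfl⟩, rfl⟩
    exact ⟨FreeGroup.of (Fin.natAdd m j), by simp [coeffSubst, Fin.append_right]⟩

end CoeffSubst

/-- A finitely generated group which is 1-equationally Artinian is equationally Artinian
in the Diophantine sense. -/
theorem fg_oneEqArtinian_to_eqArtinian {H : Type*} [Group H] (hH : Group.FG H)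
    (h1 : ∀ (n : ℕ) (E : Set (Fin n → H)), ∃ E₀ ⊆ E, E₀.Finite ∧ Rad1 H E₀ = Rad1 H E) :
    ∀ (n : ℕ) (E : Set (Fin n → H)), ∃ E₀ ⊆ E, E₀.Finite ∧ RadH H E₀ = RadH H E := by
  obtain ⟨S, hS, hSfin⟩ := Group.fg_iff.mp hH
  obtain ⟨m, g, -, rfl⟩ := hSfin.fin_param
  intro n E
  obtain ⟨E₀', hsub, hfin, hrad⟩ := h1 (m + n) (Fin.append g '' E)
  have hinj := Fin.append_right_injective (n := n) g
  refine ⟨Fin.append g ⁻¹' E₀', ?_, hfin.preimage hinj.injOn, ?_⟩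
  · simpa only [hinj.preimage_image] using Set.preimage_mono (f := Fin.append g) hsub
  · apply Set.preimage_injective.mpr (coeffSubst_surjective n hS)
    rw [preimage_coeffSubst_radH, preimage_coeffSubst_radH,
      Set.image_preimage_eq_of_subset (hsub.trans (Set.image_subset_range _ _)), hrad]
end

section
/- The infinite cyclic group (Multiplicative ℤ) is 1-equationally Artinian: for every natural number n and every subset E ⊆ (Fin n → Multiplicative ℤ), there exists a finite subset E₀ ⊆ E with Rad₁(E₀) = Rad₁(E). -/
open Multiplicative

/-- The universal exponent-sum homomorphism. -/
noncomputable def PhiW (n : ℕ) :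
    FreeGroup (Fin n) →* Multiplicative ((Fin n → ℤ) →ₗ[ℤ] ℤ) :=
  FreeGroup.lift fun i => ofAdd (LinearMap.proj i)

lemma lift_eq_phi {n : ℕ} (e : Fin n → Multiplicative ℤ) (w : FreeGroup (Fin n)) :
    FreeGroup.lift e w = ofAdd (toAdd (PhiW n w) (fun i => toAdd (e i))) := by
  set e' : Fin n → ℤ := fun i => toAdd (e i)
  let ev : ((Fin n → ℤ) →ₗ[ℤ] ℤ) →+ ℤ :=
    { toFun := fun f => f e', map_zero' := rfl, map_add' := fun f g => rfl }
  have : FreeGroup.lift e = (AddMonoidHom.toMultiplicative ev).comp (PhiW n) := by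
    apply FreeGroup.ext_hom
    intro i
    simp [PhiW, ev, e']
  rw [this]
  rfl

/-- The infinite cyclic group is 1-equationally Artinian. -/
theorem infiniteCyclic_oneEqArtinian :
    ∀ (n : ℕ) (E : Set (Fin n → Multiplicative ℤ)),
      ∃ E₀ ⊆ E, E₀.Finite ∧
        Rad1 (Multiplicative ℤ) E₀ = Rad1 (Multiplicative ℤ) E := by
  intro n E
  set t : (Fin n → Multiplicative ℤ) → (Fin n → ℤ) := fun e i => toAdd (e i) with ht
  have htinj : Function.Injective t := by
    intro a b h
    funext i
    exact congrFun h i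
  -- find a finite subset of t '' E spanning the same submodule
  have hfg : (Submodule.span ℤ (t '' E)).FG := IsNoetherian.noetherian _
  obtain ⟨S, hS⟩ := hfg
  have hT : ∃ T : Set (Fin n → ℤ), T ⊆ t '' E ∧ T.Finite ∧
      Submodule.span ℤ (t '' E) ≤ Submodule.span ℤ T := by
    have key : ∀ s ∈ (S : Set (Fin n → ℤ)), ∃ T : Finset (Fin n → ℤ),
        ↑T ⊆ t '' E ∧ s ∈ Submodule.span ℤ (T : Set (Fin n → ℤ)) := by
      intro s hs
      exact Submodule.mem_span_finite_of_mem_span (hS ▸ Submodule.subset_span hs)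
    choose f hf1 hf2 using key
    refine ⟨⋃ s ∈ S.attach, (f s.1 (by simpa using s.2) : Set (Fin n → ℤ)), ?_, ?_, ?_⟩
    · exact Set.iUnion₂_subset fun s _ => hf1 _ _
    · exact Set.Finite.biUnion S.attach.finite_toSet fun s _ => (f s.1 _).finite_toSet
    · rw [← hS]
      apply Submodule.span_le.2
      intro s hs
      exact Submodule.span_mono (Set.subset_iUnion₂ (⟨s, hs⟩ : {x // x ∈ S}) (by simp))
        (hf2 s (by simpa using hs))
  obtain ⟨T, hTE, hTfin, hTspan⟩ := hT
  refine ⟨E ∩ t ⁻¹' T, Set.inter_subset_left, ?_, ?_⟩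
  · exact Set.Finite.subset (hTfin.preimage (htinj.injOn)) Set.inter_subset_right
  · apply Set.Subset.antisymm
    swap
    · intro w hw e he
      exact hw e he.1
    · intro w hw e he
      have key : ∀ v ∈ Submodule.span ℤ (t '' E), toAdd (PhiW n w) v = 0 := by
        intro v hv
        have hv' : v ∈ Submodule.span ℤ T := hTspan hv
        have : T ⊆ (LinearMap.ker (toAdd (PhiW n w)) : Set (Fin n → ℤ)) := by
          intro u hu
          obtain ⟨e0, he0, rfl⟩ := hTE hu
          have := hw e0 ⟨he0, hu⟩
          rw [lift_eq_phi] at this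
          simpa using this
        have := Submodule.span_le.2 this hv'
        simpa using this
      rw [lift_eq_phi]
      have := key (t e) (Submodule.subset_span ⟨e, he, rfl⟩)
      simp [this]
      exact this
end

section
/- The infinite cyclic group (Multiplicative ℤ) is equationally Artinian (in the Diophantine sense, with coefficients from the group itself). -/
/-- A group is equationally Artinian (Diophantine sense). -/
def EquationallyArtinian (H : Type*) [Group H] : Prop :=
  ∀ (n : ℕ) (E : Set (Fin n → H)), ∃ E₀ ⊆ E, E₀.Finite ∧ RadH H E₀ = RadH H E

/-!
Evaluating a word `w` at `e ∈ ℤⁿ` gives `c + ∑ aᵢ eᵢ`, where `c` is the exponent sum of the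
constants in `w` and `aᵢ` that of the variable `xᵢ`. So the evaluation is a linear functional `φ_w`
on `ℤ × ℤⁿ` applied to `(1, e)`, and `Rad(E)` depends only on the `ℤ`-span of `{(1, e) | e ∈ E}`.
Since `ℤ × ℤⁿ` is Noetherian, finitely many of these vectors already span it.
-/

namespace MultiplicativeInt

open Monoid

variable {n : ℕ}

def pointVector (e : Fin n → Multiplicative ℤ) : ℤ × (Fin n → ℤ) :=
  (1, fun i => (e i).toAdd)

lemma pointVector_injective : Function.Injective (pointVector (n := n)) := fun _ _ h =>
  funext fun i => Multiplicative.toAdd.injective (congrFun (congrArg Prod.snd h) i)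

def exponentFunctional :
    Coprod (Multiplicative ℤ) (FreeGroup (Fin n)) →*
      Multiplicative (Module.Dual ℤ (ℤ × (Fin n → ℤ))) :=
  Coprod.lift (AddMonoidHom.toMultiplicative (zmultiplesHom _ (LinearMap.fst ℤ ℤ _)))
    (FreeGroup.lift fun i => .ofAdd ((LinearMap.proj i).comp (LinearMap.snd ℤ ℤ _)))

lemma lift_apply_eq_ofAdd_exponentFunctional (e : Fin n → Multiplicative ℤ)
    (w : Coprod (Multiplicative ℤ) (FreeGroup (Fin n))) :
    Coprod.lift (MonoidHom.id _) (FreeGroup.lift e) w =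
      .ofAdd ((exponentFunctional w).toAdd (pointVector e)) := by
  let evalAt : Multiplicative (Module.Dual ℤ (ℤ × (Fin n → ℤ))) →* Multiplicative ℤ :=
    AddMonoidHom.toMultiplicative (LinearMap.applyₗ (pointVector e)).toAddMonoidHom
  suffices Coprod.lift (MonoidHom.id _) (FreeGroup.lift e) = evalAt.comp exponentFunctional from
    DFunLike.congr_fun this w
  apply Coprod.hom_ext <;> ext <;> simp [evalAt, exponentFunctional, pointVector]

lemma radH_eq_setOf_span_le_ker (E : Set (Fin n → Multiplicative ℤ)) :
    RadH (Multiplicative ℤ) E =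
      {w | Submodule.span ℤ (pointVector '' E) ≤ LinearMap.ker (exponentFunctional w).toAdd} := by
  ext w
  simp only [RadH, Set.mem_ofPred_eq, Submodule.span_le, Set.subset_def, Set.forall_mem_image,
    SetLike.mem_coe, LinearMap.mem_ker, lift_apply_eq_ofAdd_exponentFunctional, ofAdd_eq_one]

end MultiplicativeInt

/-- The infinite cyclic group is equationally Artinian. -/
theorem infiniteCyclic_equationallyArtinian :
    EquationallyArtinian (Multiplicative ℤ) := by
  intro n E
  obtain ⟨t, ht, hspan⟩ := (Submodule.fg_span_iff_fg_span_finset_subset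
    (MultiplicativeInt.pointVector '' E)).mp (IsNoetherian.noetherian (R := ℤ) _)
  obtain ⟨E₀, hE₀, himage⟩ := Set.subset_image_iff.mp ht
  have hE₀_finite : E₀.Finite := (himage ▸ t.finite_toSet).of_finite_image
    MultiplicativeInt.pointVector_injective.injOn
  refine ⟨E₀, hE₀, hE₀_finite, ?_⟩
  simp only [MultiplicativeInt.radH_eq_setOf_span_le_ker, hspan, himage]
end

section
/- If A and B are equationally Artinian groups, then the direct product A × B is equationally Artinian. -/
/-!
A word `w` vanishes at a point `e` of `(A × B)ⁿ` iff its projection to `A ∗ F(X)` vanishes at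
the first coordinates of `e` and its projection to `B ∗ F(X)` at the second ones. Hence
`Rad_{A×B}(E)` is cut out by `Rad_A(π_A E)` and `Rad_B(π_B E)`; finite subsets of `π_A E` and
`π_B E` computing these radicals lift to finite subsets of `E`, whose union computes `Rad_{A×B}(E)`.
-/

open Monoid.Coprod

section

variable {H K : Type*} [Group H] [Group K] {n : ℕ}

theorem map_lift_freeGroupLift (f : H →* K) (e : Fin n → H) (w : H ∗ FreeGroup (Fin n)) :
    f (lift (MonoidHom.id H) (FreeGroup.lift e) w) =
      lift (MonoidHom.id K) (FreeGroup.lift (f ∘ e)) (map f (MonoidHom.id _) w) := by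
  suffices f.comp (lift (MonoidHom.id H) (FreeGroup.lift e)) =
      (lift (MonoidHom.id K) (FreeGroup.lift (f ∘ e))).comp (map f (MonoidHom.id _)) from
    DFunLike.congr_fun this w
  refine hom_ext ?_ ?_ <;> ext <;> simp

theorem RadH_anti {E₀ E : Set (Fin n → H)} (h : E₀ ⊆ E) : RadH H E ⊆ RadH H E₀ :=
  fun _ hw e he => hw e (h he)

theorem map_mem_RadH_image_iff (f : H →* K) {E : Set (Fin n → H)} {w : H ∗ FreeGroup (Fin n)} :
    map f (MonoidHom.id _) w ∈ RadH K ((f ∘ ·) '' E) ↔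
      ∀ e ∈ E, f (lift (MonoidHom.id H) (FreeGroup.lift e) w) = 1 := by
  simp only [RadH, Set.mem_ofPred_eq, Set.forall_mem_image, map_lift_freeGroupLift]

end

theorem mem_RadH_prod_iff {A B : Type*} [Group A] [Group B] {n : ℕ} {E : Set (Fin n → A × B)}
    {w : (A × B) ∗ FreeGroup (Fin n)} :
    w ∈ RadH (A × B) E ↔
      map (MonoidHom.fst A B) (MonoidHom.id _) w ∈ RadH A ((Prod.fst ∘ ·) '' E) ∧
        map (MonoidHom.snd A B) (MonoidHom.id _) w ∈ RadH B ((Prod.snd ∘ ·) '' E) := by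
  refine ((forall₂_congr fun _ _ => Prod.ext_iff).trans forall₂_and).trans ?_
  exact and_congr (map_mem_RadH_image_iff (MonoidHom.fst A B)).symm
    (map_mem_RadH_image_iff (MonoidHom.snd A B)).symm

/-- The direct product of two equationally Artinian groups is equationally Artinian. -/
theorem prod_equationallyArtinian {A B : Type*} [Group A] [Group B]
    (hA : EquationallyArtinian A) (hB : EquationallyArtinian B) :
    EquationallyArtinian (A × B) := by
  intro n E
  obtain ⟨EA, hEA, hEA_fin, hradA⟩ := Set.exists_subset_image_finite_and.1 (hA n _)
  obtain ⟨EB, hEB, hEB_fin, hradB⟩ := Set.exists_subset_image_finite_and.1 (hB n _)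
  refine ⟨EA ∪ EB, Set.union_subset hEA hEB, hEA_fin.union hEB_fin,
    (RadH_anti (Set.union_subset hEA hEB)).antisymm' fun w hw => ?_⟩
  rw [mem_RadH_prod_iff] at hw ⊢
  rw [← hradA, ← hradB]
  exact ⟨RadH_anti (Set.image_mono Set.subset_union_left) hw.1,
    RadH_anti (Set.image_mono Set.subset_union_right) hw.2⟩
end

section
/- If H is an equationally Artinian group and k is a natural number, then the direct power H^k (the group Fin k → H with pointwise multiplication) is equationally Artinian. -/
/-!
A system of equations over `∏ᵢ Hᵢ` with solution set `E` holds at every point of `E` exactly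
when, for each `i`, its `i`-th coordinate system over `Hᵢ` holds on the `i`-th coordinate
projection of `E`. So it suffices to pick, for each of the finitely many `i`, a finite part of `E`
whose `i`-th projection has the same radical as that of `E`, and to take the union of these parts.
-/

open Monoid.Coprod Set

section Radical

variable {H : Type*} [Group H] {n : ℕ}

lemma radH_antitone : Antitone (RadH H (n := n)) :=
  fun _ _ hEF _ hw e he => hw e (hEF he)

lemma radH_eq_of_subset_of_subset {S T E : Set (Fin n → H)} (hST : S ⊆ T) (hTE : T ⊆ E)
    (hS : RadH H S = RadH H E) : RadH H T = RadH H E :=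
  (hS ▸ radH_antitone hST).antisymm (radH_antitone hTE)

lemma EquationallyArtinian.exists_finite_radH_image_eq (hH : EquationallyArtinian H)
    {α : Type*} (f : α → Fin n → H) (E : Set α) :
    ∃ S ⊆ E, S.Finite ∧ RadH H (f '' S) = RadH H (f '' E) :=
  exists_subset_image_finite_and.1 (hH n (f '' E))

end Radical

section Pi

variable {ι : Type*} {H : ι → Type*} [∀ i, Group (H i)] {n : ℕ}

lemma lift_pi_apply (e : Fin n → ∀ i, H i) (i : ι) (w : (∀ i, H i) ∗ FreeGroup (Fin n)) :
    lift (MonoidHom.id _) (FreeGroup.lift e) w i =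
      lift (MonoidHom.id (H i)) (FreeGroup.lift fun j => e j i)
        (map (Pi.evalMonoidHom H i) (MonoidHom.id _) w) := by
  have hcomp : (Pi.evalMonoidHom H i).comp (lift (MonoidHom.id _) (FreeGroup.lift e)) =
      (lift (MonoidHom.id (H i)) (FreeGroup.lift fun j => e j i)).comp
        (map (Pi.evalMonoidHom H i) (MonoidHom.id _)) := by
    refine hom_ext rfl (FreeGroup.ext_hom _ _ fun j => ?_)
    simp [map_apply_inr]
  exact DFunLike.congr_fun hcomp w

lemma radH_pi_eq_iInter (E : Set (Fin n → ∀ i, H i)) :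
    RadH (∀ i, H i) E =
      ⋂ i, map (Pi.evalMonoidHom H i) (MonoidHom.id _) ⁻¹'
        RadH (H i) ((fun e j => e j i) '' E) := by
  ext w
  simp only [RadH, mem_iInter, mem_preimage, mem_ofPred_eq, forall_mem_image, funext_iff,
    lift_pi_apply, Pi.one_apply]
  exact ⟨fun hw i e he => hw e he i, fun hw e he i => hw i he⟩

theorem EquationallyArtinian.pi [Finite ι] (hH : ∀ i, EquationallyArtinian (H i)) :
    EquationallyArtinian (∀ i, H i) := by
  intro n E
  choose S hSE hSfin hSrad using
    fun i => (hH i).exists_finite_radH_image_eq (fun (e : Fin n → ∀ i, H i) j => e j i) E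
  refine ⟨⋃ i, S i, iUnion_subset hSE, finite_iUnion hSfin, ?_⟩
  simp only [radH_pi_eq_iInter]
  refine iInter_congr fun i => congrArg _ ?_
  exact radH_eq_of_subset_of_subset (image_mono (subset_iUnion S i))
    (image_mono (iUnion_subset hSE)) (hSrad i)

end Pi

/-- A finite direct power of an equationally Artinian group is equationally Artinian. -/
theorem pow_equationallyArtinian {H : Type*} [Group H]
    (hH : EquationallyArtinian H) (k : ℕ) :
    EquationallyArtinian (Fin k → H) :=
  EquationallyArtinian.pi fun _ => hH
end

section
/- Every finitely generated Abelian group is equationally Artinian. -/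
/-!
Over an abelian group `G` the value of a word `w` at a tuple `e` splits as `c(w) · L_w(e)`, where
`c(w)` is the product of the coefficients of `w` and `L_w` is a homomorphism in `e`. Homogenizing,
`w` vanishes at `e` iff the `ℤ`-linear map `(t, v) ↦ t • c(w) + L_w(v)` kills `(1, e)`, so the
radical of `E` only depends on the subgroup of `ℤ × Gⁿ` spanned by the points `(1, e)`, `e ∈ E`.
When `G` is finitely generated, `ℤ × Gⁿ` is a Noetherian `ℤ`-module and this span is already
spanned by finitely many of these points.
-/

open Monoid.Coprod

theorem Monoid.Coprod.lift_mul_lift {M N P : Type*} [MulOneClass M] [MulOneClass N]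
    [CommMonoid P] (f f' : M →* P) (g g' : N →* P) :
    lift f g * lift f' g' = lift (f * f') (g * g') := by
  apply hom_ext <;> ext <;> simp

theorem FreeGroup.lift_mul {α G : Type*} [CommGroup G] (v v' : α → G) :
    FreeGroup.lift (v * v') = FreeGroup.lift v * FreeGroup.lift v' := by
  ext; simp

theorem Submodule.exists_finite_subset_span_image_eq (R : Type*) {M ι : Type*} [Semiring R]
    [AddCommMonoid M] [Module R M] [IsNoetherian R M] (f : ι → M) (S : Set ι) :
    ∃ T ⊆ S, T.Finite ∧ span R (f '' T) = span R (f '' S) := by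
  obtain ⟨_, ⟨T, hTS, hT, rfl⟩, hmax⟩ := set_has_maximal_iff_noetherian.mpr ‹_›
    {N | ∃ T ⊆ S, T.Finite ∧ N = span R (f '' T)} ⟨_, ∅, S.empty_subset, Set.finite_empty, rfl⟩
  refine ⟨T, hTS, hT, le_antisymm (span_mono (Set.image_mono hTS)) ?_⟩
  rw [span_le, Set.image_subset_iff]
  intro s hs
  have hle : span R (f '' T) ≤ span R (f '' insert s T) :=
    span_mono (Set.image_mono (Set.subset_insert s T))
  have heq : span R (f '' T) = span R (f '' insert s T) :=
    hle.eq_of_not_lt (hmax _ ⟨_, Set.insert_subset hs hTS, hT.insert s, rfl⟩)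
  exact heq ▸ subset_span (Set.mem_image_of_mem f (Set.mem_insert s T))

section CommGroup

variable {α G : Type*} [CommGroup G]

theorem lift_id_freeGroupLift_eq_mul (e : α → G) :
    lift (MonoidHom.id G) (FreeGroup.lift e) =
      lift (MonoidHom.id G) 1 * lift 1 (FreeGroup.lift e) := by
  rw [lift_mul_lift, mul_one, one_mul]

theorem lift_one_freeGroupLift_mul (v v' : α → G) :
    lift (1 : G →* G) (FreeGroup.lift (v * v')) =
      lift 1 (FreeGroup.lift v) * lift 1 (FreeGroup.lift v') := by
  rw [lift_mul_lift, mul_one, FreeGroup.lift_mul]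

end CommGroup

section AddCommGroup

variable {A : Type*} [AddCommGroup A] {n : ℕ}

def homogeneousPoint (e : Fin n → Multiplicative A) : ℤ × (Fin n → A) :=
  (1, fun i => (e i).toAdd)

def homogeneousEval (w : Monoid.Coprod (Multiplicative A) (FreeGroup (Fin n))) :
    ℤ × (Fin n → A) →ₗ[ℤ] A :=
  AddMonoidHom.toIntLinearMap <| AddMonoidHom.mk'
    (fun p => p.1 • (lift (MonoidHom.id _) 1 w).toAdd +
      (lift 1 (FreeGroup.lift fun i => Multiplicative.ofAdd (p.2 i)) w).toAdd)
    (fun p q => by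
      simp only [Prod.fst_add, Prod.snd_add, Pi.add_apply, ofAdd_add, add_smul]
      rw [← Pi.mul_def, lift_one_freeGroupLift_mul, MonoidHom.mul_apply, toAdd_mul]
      abel)

theorem lift_freeGroupLift_eq_one_iff (w : Monoid.Coprod (Multiplicative A) (FreeGroup (Fin n)))
    (e : Fin n → Multiplicative A) :
    lift (MonoidHom.id _) (FreeGroup.lift e) w = 1 ↔
      homogeneousEval w (homogeneousPoint e) = 0 := by
  rw [lift_id_freeGroupLift_eq_mul, MonoidHom.mul_apply, ← toAdd_eq_zero, toAdd_mul]
  simp [homogeneousEval, homogeneousPoint]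

theorem mem_radH_iff_span_le {E : Set (Fin n → Multiplicative A)}
    {w : Monoid.Coprod (Multiplicative A) (FreeGroup (Fin n))} :
    w ∈ RadH (Multiplicative A) E ↔
      Submodule.span ℤ (homogeneousPoint '' E) ≤ LinearMap.ker (homogeneousEval w) := by
  rw [Submodule.span_le, Set.image_subset_iff]
  exact forall₂_congr fun e _ => lift_freeGroupLift_eq_one_iff w e

theorem radH_eq_of_span_eq {E₀ E : Set (Fin n → Multiplicative A)}
    (h : Submodule.span ℤ (homogeneousPoint '' E₀) = Submodule.span ℤ (homogeneousPoint '' E)) :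
    RadH (Multiplicative A) E₀ = RadH (Multiplicative A) E := by
  ext w
  rw [mem_radH_iff_span_le, mem_radH_iff_span_le, h]

theorem equationallyArtinian_multiplicative [IsNoetherian ℤ A] :
    EquationallyArtinian (Multiplicative A) := by
  intro n E
  obtain ⟨E₀, hE₀, hfin, hspan⟩ :=
    Submodule.exists_finite_subset_span_image_eq ℤ homogeneousPoint E
  exact ⟨E₀, hE₀, hfin, radH_eq_of_span_eq hspan⟩

end AddCommGroup

/-- Every finitely generated Abelian group is equationally Artinian. -/
theorem fgAbelian_equationallyArtinian {H : Type*} [AddCommGroup H] (hfg : AddGroup.FG H) :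
    EquationallyArtinian (Multiplicative H) := by
  have : Module.Finite ℤ H := Module.Finite.iff_addGroup_fg.mpr hfg
  exact equationallyArtinian_multiplicative
end

section
/- For any field K, the additive group of K (viewed as the multiplicative group Multiplicative K with its additive group structure) is equationally Artinian. -/
/-! A word `w` in the constants of `R` and the variables `xᵢ` evaluates at `e` to `c + ∑ mᵢ eᵢ`,
where `c` is the sum of its constants and `mᵢ` the exponent sum of `xᵢ`. Hence `Rad(E)` is the
preimage under `w ↦ (c, m)` of the intersection of the kernels of the `R`-linear maps
`(c, m) ↦ c + ∑ mᵢ eᵢ` on `R × Rⁿ`. For an Artinian ring `R` this module is Artinian, and in an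
Artinian module every intersection of submodules is attained by finitely many of them. -/

theorem exists_finite_subset_biInf_eq {α ι : Type*} [CompleteLattice α] [WellFoundedLT α]
    (f : ι → α) (s : Set ι) : ∃ t ⊆ s, t.Finite ∧ ⨅ i ∈ t, f i = ⨅ i ∈ s, f i := by
  classical
  obtain ⟨T, hTs, hT⟩ := CompleteLattice.WellFoundedGT.isSupFiniteCompact αᵒᵈ (f '' s)
  obtain ⟨t, hts, rfl⟩ := Finset.subset_set_image_iff.mp hTs
  refine ⟨t, hts, t.finite_toSet, ?_⟩
  change sInf (f '' s) = (t.image f).inf id at hT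
  rw [sInf_image, Finset.inf_image, Finset.inf_eq_iInf] at hT
  simpa using hT.symm

section

variable {R : Type*} [Ring R] {n : ℕ}

variable (R n) in
noncomputable def affineCoeffs :
    Monoid.Coprod (Multiplicative R) (FreeGroup (Fin n)) →* Multiplicative (R × (Fin n → R)) :=
  Monoid.Coprod.lift (AddMonoidHom.toMultiplicative (AddMonoidHom.inl R (Fin n → R)))
    (FreeGroup.lift fun i => .ofAdd (0, Pi.single i 1))

noncomputable def evalAffine (e : Fin n → Multiplicative R) : (R × (Fin n → R)) →ₗ[R] R :=
  LinearMap.coprod LinearMap.id (Fintype.linearCombination R fun i => (e i).toAdd)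

theorem lift_eq_evalAffine_comp_affineCoeffs (e : Fin n → Multiplicative R) :
    Monoid.Coprod.lift (MonoidHom.id (Multiplicative R)) (FreeGroup.lift e) =
      (AddMonoidHom.toMultiplicative (evalAffine e).toAddMonoidHom).comp (affineCoeffs R n) := by
  apply Monoid.Coprod.hom_ext
  · ext c
    simp [affineCoeffs, evalAffine]
  · apply FreeGroup.ext_hom
    intro i
    simp [affineCoeffs, evalAffine, Fintype.linearCombination_apply, Pi.single_apply]

theorem radH_eq_preimage_biInf_ker (E : Set (Fin n → Multiplicative R)) :
    RadH (Multiplicative R) E =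
      (fun w => (affineCoeffs R n w).toAdd) ⁻¹' ↑(⨅ e ∈ E, LinearMap.ker (evalAffine e)) := by
  ext w
  simp [RadH, lift_eq_evalAffine_comp_affineCoeffs]

end

theorem equationallyArtinian_multiplicative_s7 (R : Type*) [Ring R] [IsArtinianRing R] :
    EquationallyArtinian (Multiplicative R) := by
  intro n E
  obtain ⟨E₀, hE₀, hfin, heq⟩ :=
    exists_finite_subset_biInf_eq (fun e => LinearMap.ker (evalAffine e)) E
  exact ⟨E₀, hE₀, hfin, by rw [radH_eq_preimage_biInf_ker, radH_eq_preimage_biInf_ker, heq]⟩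

/-- The additive group of any field is equationally Artinian. -/
theorem fieldAdditive_equationallyArtinian (K : Type*) [Field K] :
    EquationallyArtinian (Multiplicative K) :=
  equationallyArtinian_multiplicative_s7 K
end

section
/- The additive group ℚ/ℤ (the quotient of the additive group of rationals by the subgroup of integers, viewed as a multiplicative group via Multiplicative) is not equationally Artinian. In fact, for the subset E = { (1/p : ℚ)/ℤ : p prime } of (Fin 1 → ℚ/ℤ), there is no finite subset E₀ ⊆ E with Rad(E₀) = Rad(E). -/
/-- The additive group `ℚ/ℤ`, viewed multiplicatively. -/
abbrev QModZ : Type := Multiplicative (ℚ ⧸ (Int.castAddHom ℚ).range)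

/-- The subset `{ 1/p + ℤ : p prime } ⊆ (ℚ/ℤ)¹`. -/
def primeSet : Set (Fin 1 → QModZ) :=
  {f | ∃ p : ℕ, p.Prime ∧
    f = fun _ => Multiplicative.ofAdd (QuotientAddGroup.mk (1 / (p : ℚ)))}

/-- `ℚ/ℤ` is not equationally Artinian: no finite subset of `{ 1/p + ℤ : p prime }`
has the same radical as the whole set. -/
theorem qModZ_not_equationallyArtinian :
    ∀ E₀ ⊆ primeSet, E₀.Finite → RadH QModZ E₀ ≠ RadH QModZ primeSet := by
  classical
  intro E₀ hsub hfin h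
  set f : (Fin 1 → QModZ) → ℕ := fun e =>
    if he : ∃ p : ℕ, p.Prime ∧
        e = fun _ => Multiplicative.ofAdd (QuotientAddGroup.mk (1 / (p : ℚ)))
    then he.choose else 2 with hf
  have hfspec : ∀ e ∈ E₀, (f e).Prime ∧
      e = fun _ => Multiplicative.ofAdd (QuotientAddGroup.mk (1 / ((f e : ℕ) : ℚ))) := by
    intro e he
    have hex := hsub he
    have hfe : f e = hex.choose := dif_pos hex
    rw [hfe]
    exact hex.choose_spec
  set S : Finset ℕ := hfin.toFinset.image f with hS
  set N : ℕ := S.prod id with hN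
  have hN1 : 1 ≤ N := by
    refine Finset.one_le_prod' ?_
    intro p hp
    simp only [hS, Finset.mem_image, Set.Finite.mem_toFinset] at hp
    obtain ⟨e, he, rfl⟩ := hp
    exact (hfspec e he).1.one_lt.le
  set w : Monoid.Coprod QModZ (FreeGroup (Fin 1)) :=
    (Monoid.Coprod.inr (FreeGroup.of (0 : Fin 1))) ^ N with hw
  have key : ∀ e : Fin 1 → QModZ,
      Monoid.Coprod.lift (MonoidHom.id QModZ) (FreeGroup.lift e) w = (e 0) ^ N := by
    intro e
    rw [hw, map_pow, Monoid.Coprod.lift_apply_inr, FreeGroup.lift_apply_of]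
  have hpow : ∀ p : ℕ, 0 < p →
      ((Multiplicative.ofAdd (QuotientAddGroup.mk (1 / (p : ℚ)) :
        ℚ ⧸ (Int.castAddHom ℚ).range)) ^ N : QModZ)
      = Multiplicative.ofAdd (QuotientAddGroup.mk ((N : ℚ) / (p : ℚ))) := by
    intro p hp
    rw [← ofAdd_nsmul]
    congr 1
    rw [← QuotientAddGroup.mk_nsmul]
    congr 1
    rw [nsmul_eq_mul, mul_one_div]
  have hw0 : w ∈ RadH QModZ E₀ := by
    intro e he
    obtain ⟨hp, he'⟩ := hfspec e he
    rw [key]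
    have h0 : e 0 = Multiplicative.ofAdd (QuotientAddGroup.mk (1 / ((f e : ℕ) : ℚ))) := by
      conv_lhs => rw [he']
    rw [h0, hpow _ hp.pos]
    have hdvd : f e ∣ N := Finset.dvd_prod_of_mem id (by
      simp only [hS, Finset.mem_image, Set.Finite.mem_toFinset]
      exact ⟨e, he, rfl⟩)
    obtain ⟨m, hm⟩ := hdvd
    rw [ofAdd_eq_one, QuotientAddGroup.eq_zero_iff]
    refine ⟨(m : ℤ), ?_⟩
    have hp0 : ((f e : ℕ) : ℚ) ≠ 0 := Nat.cast_ne_zero.mpr hp.pos.ne'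
    simp only [Int.coe_castAddHom]
    push_cast [hm]
    field_simp
  have hw1 : w ∈ RadH QModZ primeSet := h ▸ hw0
  obtain ⟨q, hqN, hq⟩ := Nat.exists_infinite_primes (N + 1)
  have hmem : (fun _ : Fin 1 => Multiplicative.ofAdd
      (QuotientAddGroup.mk (1 / (q : ℚ)) : ℚ ⧸ (Int.castAddHom ℚ).range)) ∈ primeSet :=
    ⟨q, hq, rfl⟩
  have := hw1 _ hmem
  rw [key, hpow _ hq.pos, ofAdd_eq_one, QuotientAddGroup.eq_zero_iff] at this
  obtain ⟨k, hk⟩ := this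
  simp only [Int.coe_castAddHom] at hk
  have hq0 : (0 : ℚ) < (q : ℚ) := by exact_mod_cast hq.pos
  have h1 : (0 : ℚ) < (N : ℚ) / (q : ℚ) := by positivity
  have h2 : (N : ℚ) / (q : ℚ) < 1 := by
    rw [div_lt_one hq0]
    exact_mod_cast Nat.lt_of_succ_le hqN
  rw [← hk] at h1 h2
  have hk1 : 1 ≤ k := by exact_mod_cast h1
  have : (1 : ℚ) ≤ (k : ℚ) := by exact_mod_cast hk1
  linarith
end

section
/- Let m be an integer and q a rational number. If for every prime number p the rational number m/p + q is an integer, then m = 0 and q is an integer. -/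
/-!
Clearing the denominator of `q` turns `m/p + q ∈ ℤ` into `p ∣ m * q.den`. An integer divisible
by every prime is `0`, so `m = 0`, and then `q = m/2 + q` is an integer.
-/

theorem Int.eq_zero_of_forall_prime_dvd {n : ℤ} (h : ∀ p : ℕ, p.Prime → (p : ℤ) ∣ n) :
    n = 0 := by
  obtain ⟨p, hlt, hp⟩ := Nat.exists_infinite_primes (n.natAbs + 1)
  exact Int.natAbs_eq_zero.mp <| Nat.eq_zero_of_dvd_of_lt (Int.natCast_dvd.mp (h p hp)) hlt

theorem Rat.dvd_mul_den_of_div_add_eq_intCast {m k z : ℤ} {q : ℚ} (hk : k ≠ 0)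
    (h : (m : ℚ) / k + q = z) : k ∣ m * q.den := by
  refine ⟨z * q.den - q.num, ?_⟩
  have hcast : ((m * q.den : ℤ) : ℚ) = ((k * (z * q.den - q.num) : ℤ) : ℚ) := by
    push_cast
    rw [← h, ← q.mul_den_eq_num]
    field_simp
    ring
  exact_mod_cast hcast

/-- If `m/p + q` is an integer for every prime `p`, then `m = 0` and `q` is an integer. -/
theorem int_of_forall_prime (m : ℤ) (q : ℚ)
    (h : ∀ p : ℕ, p.Prime → ∃ z : ℤ, (m : ℚ) / (p : ℚ) + q = (z : ℚ)) :
    m = 0 ∧ ∃ z : ℤ, q = (z : ℚ) := by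
  have hdvd : ∀ p : ℕ, p.Prime → (p : ℤ) ∣ m * q.den := fun p hp => by
    obtain ⟨z, hz⟩ := h p hp
    exact Rat.dvd_mul_den_of_div_add_eq_intCast (mod_cast hp.ne_zero) (mod_cast hz)
  have hm : m = 0 := by
    simpa [q.den_ne_zero] using Int.eq_zero_of_forall_prime_dvd hdvd
  obtain ⟨z, hz⟩ := h 2 Nat.prime_two
  exact ⟨hm, z, by simpa [hm] using hz⟩
end

section
/- Every subgroup of an equationally Artinian group is equationally Artinian: if A is an equationally Artinian group and H is a subgroup of A, then H (as a group in its own right) is equationally Artinian. -/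
/-! An embedding `φ : H → A` identifies `Rad_H(E)` with the preimage of `Rad_A(φ E)` under the
induced map `H ∗ Fₙ → A ∗ Fₙ`, so a finite subsystem of `φ E` cut out for `A` pulls back to one
for `H`. -/

namespace EquationallyArtinian

variable {H A : Type*} [Group H] [Group A] {n : ℕ}

theorem lift_map_eq (φ : H →* A) (e : Fin n → H) (w : Monoid.Coprod H (FreeGroup (Fin n))) :
    Monoid.Coprod.lift (MonoidHom.id A) (FreeGroup.lift (φ ∘ e))
        (Monoid.Coprod.map φ (MonoidHom.id _) w) =
      φ (Monoid.Coprod.lift (MonoidHom.id H) (FreeGroup.lift e) w) := by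
  rw [← MonoidHom.comp_apply, ← MonoidHom.comp_apply]
  congr 1
  ext <;> simp

theorem radH_eq_preimage {φ : H →* A} (hφ : Function.Injective φ) (E : Set (Fin n → H)) :
    RadH H E = Monoid.Coprod.map φ (MonoidHom.id _) ⁻¹' RadH A ((φ ∘ ·) '' E) := by
  ext w
  simp [RadH, lift_map_eq, map_eq_one_iff φ hφ]

theorem of_injective {φ : H →* A} (hφ : Function.Injective φ) (hA : EquationallyArtinian A) :
    EquationallyArtinian H := by
  intro n E
  obtain ⟨F₀, hF₀E, hF₀, hrad⟩ := hA n ((φ ∘ ·) '' E)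
  refine ⟨E ∩ (φ ∘ ·) ⁻¹' F₀, Set.inter_subset_left,
    (hF₀.preimage hφ.comp_left.injOn).inter_of_right E, ?_⟩
  rw [radH_eq_preimage hφ, radH_eq_preimage hφ, Set.image_inter_preimage,
    Set.inter_eq_right.mpr hF₀E, hrad]

end EquationallyArtinian

/-- Every subgroup of an equationally Artinian group is equationally Artinian. -/
theorem subgroup_equationallyArtinian {A : Type*} [Group A]
    (hA : EquationallyArtinian A) (H : Subgroup A) :
    EquationallyArtinian H :=
  .of_injective H.subtype_injective hA
end

section
/- Let A be a group containing a subgroup H of finite index. If H (as a group in its own right) is equationally Artinian, then A is equationally Artinian. -/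
open Monoid.Coprod

namespace EquationallyArtinian

section Radical

variable {G : Type*} [Group G] {ι : Type*}

def wordEval (e : ι → G) : Monoid.Coprod G (FreeGroup ι) →* G :=
  lift (MonoidHom.id G) (FreeGroup.lift e)

@[simp]
lemma wordEval_inl (e : ι → G) (g : G) : wordEval e (inl g) = g := by
  simp [wordEval]

@[simp]
lemma wordEval_inr_of (e : ι → G) (i : ι) : wordEval e (inr (FreeGroup.of i)) = e i := by
  simp [wordEval]

def radical (E : Set (ι → G)) : Set (Monoid.Coprod G (FreeGroup ι)) :=
  {w | ∀ e ∈ E, wordEval e w = 1}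

def HasFiniteRadicalBasis (E : Set (ι → G)) : Prop :=
  ∃ E₀ ⊆ E, E₀.Finite ∧ radical E₀ = radical E

lemma radical_anti {D E : Set (ι → G)} (h : D ⊆ E) : radical E ⊆ radical D :=
  fun _ hw e he => hw e (h he)

lemma radical_iUnion {κ : Type*} (s : κ → Set (ι → G)) :
    radical (⋃ c, s c) = ⋂ c, radical (s c) := by
  ext w
  simp only [radical, Set.mem_iInter, Set.mem_ofPred_eq, Set.mem_iUnion]
  exact ⟨fun h c e he => h e ⟨c, he⟩, fun h e ⟨c, he⟩ => h c e he⟩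

lemma HasFiniteRadicalBasis.iUnion {κ : Type*} [Finite κ] {s : κ → Set (ι → G)}
    (h : ∀ c, HasFiniteRadicalBasis (s c)) : HasFiniteRadicalBasis (⋃ c, s c) := by
  choose F hFs hFfin hFrad using h
  refine ⟨⋃ c, F c, Set.iUnion_mono hFs, Set.finite_iUnion hFfin, ?_⟩
  simp only [radical_iUnion, hFrad]

variable {G' : Type*} [Group G'] {ι' : Type*}

lemma wordEval_map (φ : G →* G') (f : ι → ι') {e : ι → G} {e' : ι' → G'}
    (h : ∀ i, e' (f i) = φ (e i)) (w : Monoid.Coprod G (FreeGroup ι)) :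
    wordEval e' (map φ (FreeGroup.map f) w) = φ (wordEval e w) := by
  suffices (wordEval e').comp (map φ (FreeGroup.map f)) = φ.comp (wordEval e) from
    DFunLike.congr_fun this w
  refine hom_ext (MonoidHom.ext fun g => ?_) (FreeGroup.ext_hom _ _ fun i => ?_) <;>
    simp [map_apply_inl, map_apply_inr, h]

lemma wordEval_substitute (σ : ι → Monoid.Coprod G (FreeGroup ι')) (e : ι' → G)
    (w : Monoid.Coprod G (FreeGroup ι)) :
    wordEval e (lift inl (FreeGroup.lift σ) w) = wordEval (fun i => wordEval e (σ i)) w := by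
  suffices (wordEval e).comp (lift inl (FreeGroup.lift σ)) = wordEval (fun i => wordEval e (σ i))
    from DFunLike.congr_fun this w
  refine hom_ext (MonoidHom.ext fun g => ?_) (FreeGroup.ext_hom _ _ fun i => ?_) <;> simp

lemma HasFiniteRadicalBasis.of_image {X : Type*} {f : X → ι → G} {g : X → ι' → G'}
    (j : Monoid.Coprod G (FreeGroup ι) →* Monoid.Coprod G' (FreeGroup ι'))
    (hfg : ∀ x w, wordEval (f x) w = 1 ↔ wordEval (g x) (j w) = 1) {D : Set X}
    (h : HasFiniteRadicalBasis (g '' D)) : HasFiniteRadicalBasis (f '' D) := by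
  have hrad : ∀ D' : Set X, radical (f '' D') = j ⁻¹' radical (g '' D') := fun D' => by
    ext w
    simp only [radical, Set.mem_preimage, Set.mem_ofPred_eq, Set.forall_mem_image]
    exact forall₂_congr fun x _ => hfg x w
  obtain ⟨D₀, hD₀, hfin, hD₀rad⟩ := Set.exists_subset_image_finite_and.1 h
  exact ⟨f '' D₀, Set.image_mono hD₀, hfin.image f, by rw [hrad, hD₀rad, hrad]⟩

end Radical

section Artinian

variable {G : Type*} [Group G]

lemma hasFiniteRadicalBasis (hG : EquationallyArtinian G) {ι : Type*} [Finite ι]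
    (E : Set (ι → G)) : HasFiniteRadicalBasis E := by
  obtain ⟨N, ⟨σ⟩⟩ := Finite.exists_equiv_fin ι
  have h := HasFiniteRadicalBasis.of_image (f := id) (map (MonoidHom.id G) (FreeGroup.map σ))
    (fun e w => by rw [wordEval_map _ _ (e := e) (e' := e ∘ σ.symm) (fun i => by simp) w]; rfl)
    (hG N ((· ∘ σ.symm) '' E))
  rwa [Set.image_id] at h

lemma of_injective_s11 {G' : Type*} [Group G'] (φ : G →* G') (hφ : Function.Injective φ)
    (hG' : EquationallyArtinian G') : EquationallyArtinian G := fun n E => by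
  have h := (hG'.hasFiniteRadicalBasis ((φ ∘ ·) '' E)).of_image (f := id)
    (map φ (FreeGroup.map id))
    (fun e w => by rw [wordEval_map φ id (e' := φ ∘ e) (fun i => rfl), map_eq_one_iff φ hφ]; rfl)
  rwa [Set.image_id] at h

end Artinian

section CosetRewriting

variable {A : Type*} [Group A] (K : Subgroup A) [K.Normal] {ι : Type*}

open Classical in
/-- Normalized so that `cosetRep K 1 = 1`: then `conjTuple K k (i, 1) = k i`, so the variables of a
word over `A` are themselves among the conjugates. -/
noncomputable def cosetRep (q : A ⧸ K) : A := if q = 1 then 1 else q.out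

@[simp]
lemma mk_cosetRep (q : A ⧸ K) : ((cosetRep K q : A) : A ⧸ K) = q := by
  by_cases h : q = 1 <;> simp [cosetRep, h]

lemma cosetRep_one : cosetRep K 1 = 1 := by simp [cosetRep]

lemma cosetRep_inv_mul_mem (a : A) : (cosetRep K a)⁻¹ * a ∈ K :=
  QuotientGroup.eq.mp (mk_cosetRep K a)

noncomputable def cosetRepCocycle (a : A) (q : A ⧸ K) : K :=
  ⟨a * cosetRep K q * (cosetRep K (a * q))⁻¹, (QuotientGroup.eq_one_iff _).mp (by simp)⟩

noncomputable def conjTuple (k : ι → K) : ι × (A ⧸ K) → K := fun p =>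
  ⟨cosetRep K p.2 * k p.1 * (cosetRep K p.2)⁻¹, ‹K.Normal›.conj_mem _ (k p.1).2 _⟩

noncomputable def conjWord (a : A) :
    Monoid.Coprod K (FreeGroup (ι × (A ⧸ K))) →* Monoid.Coprod K (FreeGroup (ι × (A ⧸ K))) :=
  lift (inl.comp (MulAut.conjNormal a).toMonoidHom)
    (FreeGroup.lift fun p => inl (cosetRepCocycle K a p.2) * inr (FreeGroup.of (p.1, a * p.2)) *
      (inl (cosetRepCocycle K a p.2))⁻¹)

lemma wordEval_conjWord (k : ι → K) (a : A) (W : Monoid.Coprod K (FreeGroup (ι × (A ⧸ K)))) :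
    (wordEval (conjTuple K k) (conjWord K a W) : A) = a * wordEval (conjTuple K k) W * a⁻¹ := by
  suffices K.subtype.comp ((wordEval (conjTuple K k)).comp (conjWord K a)) =
      (MulAut.conj a).toMonoidHom.comp (K.subtype.comp (wordEval (conjTuple K k))) from
    DFunLike.congr_fun this W
  refine hom_ext (MonoidHom.ext fun κ => ?_) (FreeGroup.ext_hom _ _ fun p => ?_)
  · simp [conjWord]
  · simp [conjWord, cosetRepCocycle, conjTuple]
    group

lemma exists_wordEval_eq_wordEval_conjTuple_mul (w : Monoid.Coprod A (FreeGroup ι)) :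
    ∃ (W : Monoid.Coprod K (FreeGroup (ι × (A ⧸ K)))) (b : A),
      ∀ k : ι → K, wordEval (fun i => (k i : A)) w = wordEval (conjTuple K k) W * b := by
  induction w using Monoid.Coprod.induction_on with
  | inl a => exact ⟨1, a, fun k => by simp⟩
  | inr g =>
    refine ⟨inr (FreeGroup.map (·, 1) g), 1, fun k => ?_⟩
    have h : (wordEval fun i => (k i : A)).comp inr =
        K.subtype.comp ((wordEval (conjTuple K k)).comp (inr.comp (FreeGroup.map (·, 1)))) :=
      FreeGroup.ext_hom _ _ fun i => by simp [conjTuple, cosetRep_one]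
    simpa using DFunLike.congr_fun h g
  | mul w₁ w₂ h₁ h₂ =>
    obtain ⟨W₁, b₁, h₁⟩ := h₁
    obtain ⟨W₂, b₂, h₂⟩ := h₂
    refine ⟨W₁ * conjWord K b₁ W₂, b₁ * b₂, fun k => ?_⟩
    simp only [map_mul, h₁, h₂, Subgroup.coe_mul, wordEval_conjWord]
    group

lemma hasFiniteRadicalBasis_image_val [Finite ι] [K.FiniteIndex] (hK : EquationallyArtinian K)
    (D : Set (ι → K)) : HasFiniteRadicalBasis ((fun k i => (k i : A)) '' D) := by
  rcases D.eq_empty_or_nonempty with rfl | ⟨k₀, hk₀⟩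
  · exact ⟨∅, by simp, Set.finite_empty, by simp⟩
  obtain ⟨D₀, hD₀, hfin, hrad⟩ :=
    Set.exists_subset_image_finite_and.1 (hK.hasFiniteRadicalBasis (conjTuple K '' D))
  have hD₁ : insert k₀ D₀ ⊆ D := Set.insert_subset hk₀ hD₀
  have hrad₁ : radical (conjTuple K '' insert k₀ D₀) = radical (conjTuple K '' D) :=
    (hrad ▸ radical_anti (Set.image_mono (Set.subset_insert _ _))).antisymm
      (radical_anti (Set.image_mono hD₁))
  refine ⟨_, Set.image_mono hD₁, (hfin.insert k₀).image _,
    Set.Subset.antisymm (fun w hw => ?_) (radical_anti (Set.image_mono hD₁))⟩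
  obtain ⟨W, b, hWb⟩ := exists_wordEval_eq_wordEval_conjTuple_mul K w
  have hb : b ∈ K := by
    have h := hWb k₀ ▸ hw _ ⟨k₀, Set.mem_insert _ _, rfl⟩
    rw [eq_inv_of_mul_eq_one_right h]
    exact K.inv_mem (SetLike.coe_mem _)
  have hiff : ∀ k, wordEval (fun i => (k i : A)) w = 1 ↔
      wordEval (conjTuple K k) (W * inl ⟨b, hb⟩) = 1 := fun k => by
    rw [hWb, ← OneMemClass.coe_eq_one, map_mul, wordEval_inl, Subgroup.coe_mul]
  have hW : W * inl ⟨b, hb⟩ ∈ radical (conjTuple K '' D) := hrad₁ ▸ by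
    rintro _ ⟨k, hk, rfl⟩
    exact (hiff k).1 (hw _ ⟨k, hk, rfl⟩)
  rintro _ ⟨k, hk, rfl⟩
  exact (hiff k).2 (hW _ ⟨k, hk, rfl⟩)

lemma hasFiniteRadicalBasis_image_mul [Finite ι] [K.FiniteIndex] (hK : EquationallyArtinian K)
    (s : ι → A) (D : Set (ι → K)) :
    HasFiniteRadicalBasis ((fun k i => s i * k i) '' D) :=
  (hasFiniteRadicalBasis_image_val K hK D).of_image
    (lift inl (FreeGroup.lift fun i => inl (s i) * inr (FreeGroup.of i)))
    (fun k w => by rw [wordEval_substitute]; simp)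

lemma iUnion_image_preimage_cosetRep_mul (E : Set (ι → A)) :
    ⋃ c : ι → A ⧸ K, (fun (k : ι → K) i => cosetRep K (c i) * k i) ''
      ((fun (k : ι → K) i => cosetRep K (c i) * k i) ⁻¹' E) = E := by
  refine (Set.iUnion_subset fun c => Set.image_preimage_subset _ _).antisymm fun e he => ?_
  let k : ι → K := fun i => ⟨_, cosetRep_inv_mul_mem K (e i)⟩
  have he' : (fun i => cosetRep K (e i) * (k i : A)) = e := funext fun i => mul_inv_cancel_left _ _
  exact Set.mem_iUnion.2 ⟨fun i => e i, k, by rwa [Set.mem_preimage, he'], he'⟩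

end CosetRewriting

end EquationallyArtinian

open EquationallyArtinian in
/-- A group with an equationally Artinian subgroup of finite index is equationally Artinian. -/
theorem finiteIndex_equationallyArtinian {A : Type*} [Group A]
    (H : Subgroup A) [H.FiniteIndex] (hH : EquationallyArtinian H) :
    EquationallyArtinian A := by
  intro n E
  have hK : EquationallyArtinian H.normalCore :=
    hH.of_injective_s11 (Subgroup.inclusion H.normalCore_le) (Subgroup.inclusion_injective _)
  rw [← iUnion_image_preimage_cosetRep_mul H.normalCore E]
  exact HasFiniteRadicalBasis.iUnion fun c => hasFiniteRadicalBasis_image_mul _ hK _ _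
end

section
/- Every group containing a finite-index subgroup that is finitely generated and Abelian is equationally Artinian; that is, if A is a group and H ≤ A is a subgroup of finite index that is finitely generated and commutative, then A is equationally Artinian. -/
open Subgroup

section Aux

variable {A : Type*} [Group A] {n : ℕ}

/-- Evaluation of a word at a point. -/
private def ev (e : Fin n → A) : Monoid.Coprod A (FreeGroup (Fin n)) →* A :=
  Monoid.Coprod.lift (MonoidHom.id A) (FreeGroup.lift e)

/-- Key structural lemma: with coefficients translated by elements of a normal
abelian subgroup `N`, word maps are affine. -/
private lemma exists_affine (N : Subgroup A) [N.Normal]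
    (hc : ∀ x ∈ N, ∀ y ∈ N, x * y = y * x) (e : Fin n → A)
    (w : Monoid.Coprod A (FreeGroup (Fin n))) :
    ∃ L : (Fin n → ↥N) → A,
      (∀ h h', L (h * h') = L h * L h') ∧ (∀ h, L h ∈ N) ∧
      ∀ h : Fin n → ↥N, ev (fun i => e i * (h i : A)) w = ev e w * L h := by
  set P : Monoid.Coprod A (FreeGroup (Fin n)) → Prop := fun w =>
    ∃ L : (Fin n → ↥N) → A,
      (∀ h h', L (h * h') = L h * L h') ∧ (∀ h, L h ∈ N) ∧
      ∀ h : Fin n → ↥N, ev (fun i => e i * (h i : A)) w = ev e w * L h with hP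
  have hone : P 1 := by
    refine ⟨fun _ => 1, by simp, by simp [one_mem], by simp⟩
  have hmul : ∀ u v, P u → P v → P (u * v) := by
    rintro u v ⟨Lu, mu, nu, hu⟩ ⟨Lv, mv, nv, hv⟩
    set c := ev e v with hc'
    refine ⟨fun h => (c⁻¹ * Lu h * c) * Lv h, ?_, ?_, ?_⟩
    · intro h h'
      have hswap : (c⁻¹ * Lu h' * c) * Lv h = Lv h * (c⁻¹ * Lu h' * c) := by
        refine hc _ ?_ _ (nv h)
        simpa using Subgroup.Normal.conj_mem ‹N.Normal› _ (nu h') c⁻¹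
      show c⁻¹ * Lu (h * h') * c * Lv (h * h')
          = (c⁻¹ * Lu h * c * Lv h) * (c⁻¹ * Lu h' * c * Lv h')
      rw [mu, mv]
      calc c⁻¹ * (Lu h * Lu h') * c * (Lv h * Lv h')
          = (c⁻¹ * Lu h * c) * ((c⁻¹ * Lu h' * c) * Lv h) * Lv h' := by group
        _ = (c⁻¹ * Lu h * c) * (Lv h * (c⁻¹ * Lu h' * c)) * Lv h' := by rw [hswap]
        _ = (c⁻¹ * Lu h * c * Lv h) * (c⁻¹ * Lu h' * c * Lv h') := by group
    · intro h
      refine N.mul_mem ?_ (nv h)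
      simpa using Subgroup.Normal.conj_mem ‹N.Normal› _ (nu h) c⁻¹
    · intro h
      rw [map_mul, map_mul, hu, hv, ← hc']
      group
  have hinv : ∀ u, P u → P u⁻¹ := by
    rintro u ⟨L, m, nL, hL⟩
    set c := ev e u with hc'
    refine ⟨fun h => c * (L h)⁻¹ * c⁻¹, ?_, ?_, ?_⟩
    · intro h h'
      have h1 : (L h)⁻¹ ∈ N := N.inv_mem (nL h)
      have h2 : (L h')⁻¹ ∈ N := N.inv_mem (nL h')
      show c * (L (h * h'))⁻¹ * c⁻¹ = (c * (L h)⁻¹ * c⁻¹) * (c * (L h')⁻¹ * c⁻¹)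
      rw [m, mul_inv_rev, hc _ h2 _ h1]
      group
    · intro h
      simpa using Subgroup.Normal.conj_mem ‹N.Normal› _ (N.inv_mem (nL h)) c
    · intro h
      rw [map_inv, map_inv, hL, ← hc']
      group
  have hinr : ∀ x : FreeGroup (Fin n), P (Monoid.Coprod.inr x) := by
    intro x
    induction x using FreeGroup.induction_on with
    | C1 => rw [map_one]; exact hone
    | of i =>
      refine ⟨fun h => (h i : A), fun h h' => rfl, fun h => (h i).2, fun h => ?_⟩
      show ev (fun i => e i * (h i : A)) (Monoid.Coprod.inr (FreeGroup.of i))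
          = ev e (Monoid.Coprod.inr (FreeGroup.of i)) * (h i : A)
      simp [ev, Monoid.Coprod.lift_apply_inr, FreeGroup.lift_apply_of]
    | inv_of i hi => rw [map_inv]; exact hinv _ hi
    | mul x y hx hy => rw [map_mul]; exact hmul _ _ hx hy
  induction w using Monoid.Coprod.induction_on with
  | inl a =>
    refine ⟨fun _ => 1, by simp, by simp [one_mem], fun h => ?_⟩
    simp [ev, Monoid.Coprod.lift_apply_inl]
  | inr x => exact hinr x
  | mul x y hx hy => exact hmul _ _ hx hy

end Aux

section Noeth

private lemma myFG {G : Type*} [Group G] (comm : ∀ x y : G, x * y = y * x)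
    (hfg : Group.FG G) (K : Subgroup G) : K.FG := by
  letI : CommGroup G := { (inferInstance : Group G) with mul_comm := comm }
  haveI : AddGroup.FG (Additive G) := GroupFG.iff_add_fg.mp hfg
  haveI : Module.Finite ℤ (Additive G) := Module.Finite.iff_addGroup_fg.mpr ‹_›
  haveI : IsNoetherian ℤ (Additive G) := isNoetherian_of_isNoetherianRing_of_finite ℤ _
  have hsub : (AddSubgroup.toIntSubmodule (Subgroup.toAddSubgroup K)).FG :=
    IsNoetherian.noetherian _
  obtain ⟨S, hS⟩ := hsub
  rw [Subgroup.fg_iff_add_fg]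
  refine ⟨S, ?_⟩
  have h2 := congrArg Submodule.toAddSubgroup hS
  rwa [Submodule.span_int_eq_addSubgroupClosure] at h2

private lemma exists_finite_closure_subset {G : Type*} [Group G] (S : Set G)
    (hfg : (Subgroup.closure S).FG) :
    ∃ T ⊆ S, T.Finite ∧ Subgroup.closure T = Subgroup.closure S := by
  classical
  have mem_fin : ∀ x ∈ Subgroup.closure S,
      ∃ T : Set G, T ⊆ S ∧ T.Finite ∧ x ∈ Subgroup.closure T := by
    intro x hx
    induction hx using Subgroup.closure_induction with
    | mem x hx => exact ⟨{x}, by simpa, Set.finite_singleton x, Subgroup.subset_closure rfl⟩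
    | one => exact ⟨∅, by simp, Set.finite_empty, one_mem _⟩
    | mul x y hx hy ihx ihy =>
      obtain ⟨T1, h1, f1, m1⟩ := ihx
      obtain ⟨T2, h2, f2, m2⟩ := ihy
      exact ⟨T1 ∪ T2, Set.union_subset h1 h2, f1.union f2,
        mul_mem (Subgroup.closure_mono Set.subset_union_left m1)
          (Subgroup.closure_mono Set.subset_union_right m2)⟩
    | inv x hx ih =>
      obtain ⟨T, h, f, m⟩ := ih
      exact ⟨T, h, f, inv_mem m⟩
  obtain ⟨F, hF⟩ := hfg
  have hchoice : ∀ g : (F : Set G),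
      ∃ T : Set G, T ⊆ S ∧ T.Finite ∧ (g : G) ∈ Subgroup.closure T := by
    rintro ⟨g, hg⟩
    exact mem_fin g (hF ▸ Subgroup.subset_closure hg)
  choose T hTS hTfin hTmem using hchoice
  haveI : Finite ((F : Set G)) := F.finite_toSet.to_subtype
  refine ⟨⋃ g, T g, Set.iUnion_subset hTS, Set.finite_iUnion hTfin, le_antisymm ?_ ?_⟩
  · exact Subgroup.closure_mono (Set.iUnion_subset hTS)
  · rw [← hF, Subgroup.closure_le]
    rintro g hg
    exact Subgroup.closure_mono (Set.subset_iUnion T ⟨g, hg⟩) (hTmem ⟨g, hg⟩)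

end Noeth

/-- A group containing a finitely generated Abelian subgroup of finite index is
equationally Artinian. -/
theorem virtuallyFgAbelian_equationallyArtinian {A : Type*} [Group A]
    (H : Subgroup A) [H.FiniteIndex] (hfg : Group.FG H)
    (hcomm : ∀ x y : H, x * y = y * x) :
    EquationallyArtinian A := by
  classical
  intro n E
  set N := H.normalCore with hN
  haveI hNnormal : N.Normal := H.normalCore_normal
  haveI : N.FiniteIndex := Subgroup.finiteIndex_normalCore H
  haveI : Finite (A ⧸ N) := Subgroup.finite_quotient_of_finiteIndex
  have hNle : N ≤ H := H.normalCore_le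
  have hcN : ∀ x ∈ N, ∀ y ∈ N, x * y = y * x := by
    intro x hx y hy
    exact Subtype.ext_iff.mp (hcomm ⟨x, hNle hx⟩ ⟨y, hNle hy⟩)
  have hNfg : Group.FG ↥N := by
    have h1 : (N.subgroupOf H).FG := myFG hcomm hfg _
    haveI h2 : Group.FG ↥(N.subgroupOf H) := (Group.fg_iff_subgroup_fg _).mpr h1
    exact Group.fg_of_surjective (f := (Subgroup.subgroupOfEquivOfLe hNle).toMonoidHom)
      (Subgroup.subgroupOfEquivOfLe hNle).surjective
  have hcN' : ∀ x y : ↥N, x * y = y * x := fun x y => Subtype.ext (hcN x x.2 y y.2)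
  have hcPi : ∀ x y : (Fin n → ↥N), x * y = y * x := fun x y => funext fun i => hcN' _ _
  have hPifg : Group.FG (Fin n → ↥N) := by
    letI : CommGroup ↥N := { (inferInstance : Group ↥N) with mul_comm := hcN' }
    haveI : Module.Finite ℤ (Additive ↥N) :=
      Module.Finite.iff_addGroup_fg.mpr (GroupFG.iff_add_fg.mp hNfg)
    haveI : Module.Finite ℤ (Fin n → Additive ↥N) := Module.Finite.pi
    haveI : Module.Finite ℤ (Additive (Fin n → ↥N)) :=
      Module.Finite.equiv
        (AddEquiv.toIntLinearEquiv (AddEquiv.piAdditive (fun _ : Fin n => ↥N)).symm)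
    exact GroupFG.iff_add_fg.mpr (Module.Finite.iff_addGroup_fg.mp ‹_›)
  -- patterns
  let pt : (Fin n → A) → (Fin n → A ⧸ N) := fun e i => ↑(e i)
  let P : Set (Fin n → A ⧸ N) := pt '' E
  have hPfin : P.Finite := Set.toFinite P
  have hbase' : ∀ t : Fin n → A ⧸ N, ∃ b : Fin n → A, t ∈ P → b ∈ E ∧ pt b = t := by
    intro t
    by_cases ht : t ∈ P
    · obtain ⟨e, he, hpe⟩ := ht
      exact ⟨e, fun _ => ⟨he, hpe⟩⟩
    · exact ⟨fun _ => 1, fun h => absurd h ht⟩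
  choose base hbase using hbase'
  let D : (Fin n → A ⧸ N) → Set (Fin n → ↥N) :=
    fun t => {h | (fun i => base t i * (h i : A)) ∈ E}
  have hT : ∀ t, ∃ T ⊆ D t, T.Finite ∧ Subgroup.closure T = Subgroup.closure (D t) :=
    fun t => exists_finite_closure_subset _ (myFG hcPi hPifg _)
  choose T hTsub hTfin hTclos using hT
  set E₀ : Set (Fin n → A) :=
    ⋃ t ∈ P, insert (base t) ((fun h : Fin n → ↥N => fun i => base t i * ((h i : A))) '' T t)
    with hE₀def
  have hE₀sub : E₀ ⊆ E := by
    intro e he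
    simp only [hE₀def, Set.mem_iUnion] at he
    obtain ⟨t, htP, he⟩ := he
    rcases Set.mem_insert_iff.mp he with h | h
    · exact h ▸ (hbase t htP).1
    · obtain ⟨h, hhT, rfl⟩ := h
      exact hTsub t hhT
  refine ⟨E₀, hE₀sub, ?_, ?_⟩
  · exact Set.Finite.biUnion hPfin fun t _ => ((hTfin t).image _).insert _
  · ext w
    simp only [RadH, Set.mem_setOf_eq]
    constructor
    · intro hw e he
      have htP : pt e ∈ P := ⟨e, he, rfl⟩
      obtain ⟨hbe, hbpt⟩ := hbase _ htP
      have hbE0 : base (pt e) ∈ E₀ := Set.mem_biUnion htP (Set.mem_insert _ _)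
      have hmemN : ∀ i, (base (pt e) i)⁻¹ * e i ∈ N := by
        intro i
        have : ((base (pt e) i : A) : A ⧸ N) = ((e i : A) : A ⧸ N) := congrFun hbpt i
        exact QuotientGroup.eq.mp this
      set h0 : Fin n → ↥N := fun i => ⟨_, hmemN i⟩ with hh0
      have hpoint : (fun i => base (pt e) i * (h0 i : A)) = e := by
        funext i
        simp [hh0, mul_inv_cancel_left]
      obtain ⟨L, Lmul, Lmem, Lval⟩ := exists_affine N hcN (base (pt e)) w
      let Lhom : (Fin n → ↥N) →* A := MonoidHom.mk' L Lmul
      have hbval : ev (base (pt e)) w = 1 := hw _ hbE0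
      have hker : Subgroup.closure (T (pt e)) ≤ Lhom.ker := by
        rw [Subgroup.closure_le]
        intro h hh
        have hptE0 : (fun i => base (pt e) i * ((h i : A))) ∈ E₀ :=
          Set.mem_biUnion htP (Set.mem_insert_of_mem _ ⟨h, hh, rfl⟩)
        have hthis : ev (fun i => base (pt e) i * ((h i : A))) w = 1 := hw _ hptE0
        rw [Lval h, hbval, one_mul] at hthis
        exact hthis
      have h0D : h0 ∈ D (pt e) := by
        show (fun i => base (pt e) i * (h0 i : A)) ∈ E
        rw [hpoint]
        exact he
      have h0mem : h0 ∈ Lhom.ker := hker (by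
        rw [hTclos]
        exact Subgroup.subset_closure h0D)
      have hLh0 : L h0 = 1 := h0mem
      show ev e w = 1
      calc ev e w = ev (fun i => base (pt e) i * (h0 i : A)) w := by rw [hpoint]
        _ = ev (base (pt e)) w * L h0 := Lval h0
        _ = 1 := by rw [hbval, hLh0, one_mul]
    · intro hw e he
      exact hw e (hE₀sub he)
end

section
/- Let K be a field and let A be a group containing a finite-index subgroup isomorphic (as a group) to the additive group of K. Then A is equationally Artinian. -/
section SpanSel

lemma spanSel {K V : Type*} [Field K] [AddCommGroup V] [Module K V]
    [FiniteDimensional K V] (T : Set V) :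
    ∃ T₀ ⊆ T, T₀.Finite ∧ Submodule.span K T₀ = Submodule.span K T := by
  classical
  obtain ⟨G, hG⟩ := (IsNoetherian.noetherian (Submodule.span K T))
  have hmem : ∀ g ∈ G, ∃ t : Finset V, ↑t ⊆ T ∧ (g : V) ∈ Submodule.span K (t : Set V) := by
    intro g hg
    exact Submodule.mem_span_finite_of_mem_span (hG ▸ Submodule.subset_span hg)
  choose f hf1 hf2 using hmem
  refine ⟨⋃ g ∈ G.attach, (f g.1 g.2 : Set V), ?_, ?_, ?_⟩
  · exact Set.iUnion₂_subset fun g _ => hf1 g.1 g.2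
  · exact (G.attach.finite_toSet).biUnion fun g _ => (f g.1 g.2).finite_toSet
  · refine le_antisymm (Submodule.span_mono (Set.iUnion₂_subset fun g _ => hf1 g.1 g.2)) ?_
    rw [← hG]
    refine Submodule.span_le.2 fun g hg => ?_
    refine Submodule.span_mono (Set.subset_iUnion₂ (⟨g, hg⟩ : {x // x ∈ G}) (G.mem_attach _)) (hf2 g hg)

lemma spanSelImage {K V X : Type*} [Field K] [AddCommGroup V] [Module K V]
    [FiniteDimensional K V] (f : X → V) (S : Set X) :
    ∃ S₀ ⊆ S, S₀.Finite ∧ ∀ x ∈ S, f x ∈ Submodule.span K (f '' S₀) := by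
  classical
  obtain ⟨T₀, hT₀S, hT₀fin, hspan⟩ := spanSel (K := K) (f '' S)
  have hch : ∀ t ∈ T₀, ∃ x ∈ S, f x = t := fun t ht => hT₀S ht
  choose g hg1 hg2 using hch
  refine ⟨{x | ∃ t, ∃ ht : t ∈ T₀, g t ht = x}, ?_, ?_, ?_⟩
  · rintro x ⟨t, ht, rfl⟩; exact hg1 t ht
  · have hsub : {x | ∃ t, ∃ ht : t ∈ T₀, g t ht = x} ⊆
        (fun p : {t // t ∈ T₀} => g p.1 p.2) '' Set.univ := by
      rintro x ⟨t, ht, rfl⟩; exact ⟨⟨t, ht⟩, trivial, rfl⟩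
    have := hT₀fin.to_subtype
    exact Set.Finite.subset (Set.finite_univ.image _) hsub
  · intro x hx
    have h1 : T₀ ⊆ f '' {x | ∃ t, ∃ ht : t ∈ T₀, g t ht = x} := by
      intro t ht; exact ⟨g t ht, ⟨t, ht, rfl⟩, hg2 t ht⟩
    have h2 : f x ∈ Submodule.span K T₀ := by
      rw [hspan]; exact Submodule.subset_span ⟨x, hx, rfl⟩
    exact Submodule.span_mono h1 h2

end SpanSel

section Machinery

variable {A : Type*} [Group A]

/-- evaluation homomorphism -/
def phiEval {n : ℕ} (e : Fin n → A) : Monoid.Coprod A (FreeGroup (Fin n)) →* A :=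
  Monoid.Coprod.lift (MonoidHom.id A) (FreeGroup.lift e)

@[simp] lemma phiEval_inl {n : ℕ} (e : Fin n → A) (a : A) :
    phiEval e (Monoid.Coprod.inl a) = a :=
  Monoid.Coprod.lift_apply_inl _ _ a

@[simp] lemma phiEval_inr {n : ℕ} (e : Fin n → A) (u : FreeGroup (Fin n)) :
    phiEval e (Monoid.Coprod.inr u) = FreeGroup.lift e u :=
  Monoid.Coprod.lift_apply_inr _ _ u

/-- kernel of the conjugation action on a normal subgroup -/
def Cq (N : Subgroup A) [N.Normal] : Subgroup A :=
  MonoidHom.ker (MulAut.conjNormal (H := N))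

instance CqNormal (N : Subgroup A) [N.Normal] : (Cq N).Normal :=
  MonoidHom.normal_ker _

/-- induced action of the quotient by `Cq` -/
def betaQ (N : Subgroup A) [N.Normal] : A ⧸ Cq N →* MulAut ↥N :=
  QuotientGroup.lift (Cq N) (MulAut.conjNormal (H := N)) (fun _ hx => hx)

@[simp] lemma betaQ_mk (N : Subgroup A) [N.Normal] (a : A) :
    betaQ N (QuotientGroup.mk a) = MulAut.conjNormal (H := N) a := rfl

lemma betaQ_comp (N : Subgroup A) [N.Normal] (p q : A ⧸ Cq N) (x : ↥N) :
    betaQ N p (betaQ N q x) = betaQ N (p * q) x := by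
  rw [map_mul]; rfl

end Machinery

section Key

variable {K : Type*} [Field K] {A : Type*} [Group A]

lemma key_lemma (N : Subgroup A) [N.Normal] [Fintype (A ⧸ Cq N)]
    (μ : ↥N → K) (hμ : ∀ x y : ↥N, μ (x * y) = μ x + μ y)
    {n : ℕ} (w : Monoid.Coprod A (FreeGroup (Fin n))) (c : Fin n → A) :
    ∃ m : Fin n → (A ⧸ Cq N) → ℤ,
      ∀ ν : Fin n → ↥N, ∃ x : ↥N,
        phiEval (fun i => c i * (ν i : A)) w = phiEval c w * (x : A) ∧
        ∀ p : A ⧸ Cq N, μ (betaQ N p x) =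
          ∑ i, ∑ q, m i q • μ (betaQ N (p * q) (ν i)) := by
  classical
  have hμ1 : μ 1 = 0 := by
    have h := hμ 1 1
    rw [mul_one] at h
    exact (left_eq_add.mp h)
  have hμinv : ∀ x : ↥N, μ x⁻¹ = - μ x := by
    intro x
    have h := hμ x x⁻¹
    rw [mul_inv_cancel, hμ1] at h
    exact eq_neg_of_add_eq_zero_right h.symm
  -- the statement as a motive
  set C : Monoid.Coprod A (FreeGroup (Fin n)) → Prop := fun w =>
    ∃ m : Fin n → (A ⧸ Cq N) → ℤ,
      ∀ ν : Fin n → ↥N, ∃ x : ↥N,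
        phiEval (fun i => c i * (ν i : A)) w = phiEval c w * (x : A) ∧
        ∀ p : A ⧸ Cq N, μ (betaQ N p x) =
          ∑ i, ∑ q, m i q • μ (betaQ N (p * q) (ν i)) with hC
  show C w
  have hmul : ∀ w₁ w₂, C w₁ → C w₂ → C (w₁ * w₂) := by
    rintro w₁ w₂ ⟨m₁, hm₁⟩ ⟨m₂, hm₂⟩
    set g₂ := phiEval c w₂ with hg₂
    set p₂ : A ⧸ Cq N := (QuotientGroup.mk g₂)⁻¹ with hp₂
    refine ⟨fun i q => m₁ i (p₂⁻¹ * q) + m₂ i q, ?_⟩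
    intro ν
    obtain ⟨x₁, hx₁e, hx₁μ⟩ := hm₁ ν
    obtain ⟨x₂, hx₂e, hx₂μ⟩ := hm₂ ν
    refine ⟨betaQ N p₂ x₁ * x₂, ?_, ?_⟩
    · have hco : ((betaQ N p₂ x₁ : ↥N) : A) = g₂⁻¹ * (x₁ : A) * g₂ := by
        have : p₂ = QuotientGroup.mk g₂⁻¹ := by
          rw [hp₂]; rfl
        rw [this, betaQ_mk]
        simp [MulAut.conjNormal_apply]
      rw [map_mul, map_mul, hx₁e, hx₂e]
      push_cast
      rw [hco, ← hg₂]
      group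
    · intro p
      have hsplit : μ (betaQ N p (betaQ N p₂ x₁ * x₂)) =
          μ (betaQ N (p * p₂) x₁) + μ (betaQ N p x₂) := by
        rw [map_mul, hμ, betaQ_comp]
      have hre : ∀ i, ∑ q, m₁ i q • μ (betaQ N (p * p₂ * q) (ν i)) =
          ∑ q, m₁ i (p₂⁻¹ * q) • μ (betaQ N (p * q) (ν i)) := by
        intro i
        refine Fintype.sum_equiv (Equiv.mulLeft p₂) _ _ ?_
        intro r
        simp [Equiv.mulLeft, mul_assoc]
      rw [hsplit, hx₁μ (p * p₂), hx₂μ p, ← Finset.sum_add_distrib]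
      refine Eq.symm (Finset.sum_congr rfl fun i _ => ?_)
      simp only [add_smul]
      rw [Finset.sum_add_distrib, ← hre i]
  induction w using Monoid.Coprod.induction_on with
  | inl a =>
    refine ⟨0, fun ν => ⟨1, by simp, fun p => by simp [map_one, hμ1]⟩⟩
  | inr u =>
    induction u using FreeGroup.induction_on with
    | C1 =>
      refine ⟨0, fun ν => ⟨1, by simp, fun p => by simp [map_one, hμ1]⟩⟩
    | of i =>
      refine ⟨fun i' q => if i' = i ∧ q = 1 then 1 else 0, fun ν => ⟨ν i, ?_, ?_⟩⟩
      · have h1 : ∀ e : Fin n → A, phiEval e (Monoid.Coprod.inr (FreeGroup.of i)) = e i := fun e => by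
          rw [phiEval_inr]; exact FreeGroup.lift_apply_of
        rw [h1, h1]
      · intro p
        rw [Finset.sum_eq_single i]
        · rw [Finset.sum_eq_single (1 : A ⧸ Cq N)]
          · simp
          · intro q _ hq; simp [hq]
          · intro h; exact absurd (Finset.mem_univ _) h
        · intro i' _ hi'; simp [hi']
        · intro h; exact absurd (Finset.mem_univ _) h
    | inv_of i _ =>
      refine ⟨fun i' q => if i' = i ∧ q = QuotientGroup.mk (c i) then -1 else 0,
        fun ν => ⟨MulAut.conjNormal (H := N) (c i) (ν i)⁻¹, ?_, ?_⟩⟩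
      · have h1 : ∀ e : Fin n → A,
            phiEval e (Monoid.Coprod.inr ((FreeGroup.of i : FreeGroup (Fin n))⁻¹)) = (e i)⁻¹ := fun e => by
          rw [phiEval_inr, map_inv]
          congr 1
          exact FreeGroup.lift_apply_of
        rw [h1, h1]
        have hco : ((MulAut.conjNormal (H := N) (c i) ((ν i)⁻¹) : ↥N) : A)
            = c i * ((ν i : A))⁻¹ * (c i)⁻¹ := by
          simp [mul_assoc]
        rw [hco]
        group
      · intro p
        have hx : μ (betaQ N p (MulAut.conjNormal (H := N) (c i) (ν i)⁻¹)) =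
            - μ (betaQ N (p * QuotientGroup.mk (c i)) (ν i)) := by
          rw [← betaQ_mk, betaQ_comp, map_inv, hμinv]
        rw [hx, Finset.sum_eq_single i]
        · rw [Finset.sum_eq_single (QuotientGroup.mk (c i) : A ⧸ Cq N)]
          · simp
          · intro q _ hq; simp [hq]
          · intro h; exact absurd (Finset.mem_univ _) h
        · intro i' _ hi'; simp [hi']
        · intro h; exact absurd (Finset.mem_univ _) h
    | mul u v hu hv =>
      rw [map_mul]
      exact hmul _ _ hu hv
  | mul x y hx hy => exact hmul _ _ hx hy

end Key

section Fiber

variable {K : Type*} [Field K] {A : Type*} [Group A]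

lemma fiberSel (N : Subgroup A) [N.Normal] [Fintype (A ⧸ Cq N)]
    (μ : ↥N → K) (hμ : ∀ x y : ↥N, μ (x * y) = μ x + μ y)
    (hinj : Function.Injective μ) {n : ℕ}
    (c : Fin n → A) (F : Set (Fin n → A)) (hc : c ∈ F)
    (hF : ∀ e ∈ F, ∀ i, (c i)⁻¹ * e i ∈ N) :
    ∃ F₀ ⊆ F, F₀.Finite ∧
      ∀ w, (∀ e ∈ F₀, phiEval e w = 1) → ∀ e ∈ F, phiEval e w = 1 := by
  classical
  have hμ1 : μ 1 = 0 := by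
    have h := hμ 1 1
    rw [mul_one] at h
    exact (left_eq_add.mp h)
  let νf : (Fin n → A) → (Fin n → ↥N) := fun e i =>
    if h : (c i)⁻¹ * e i ∈ N then ⟨_, h⟩ else 1
  have hν : ∀ e ∈ F, (fun i => c i * ((νf e i : ↥N) : A)) = e := by
    intro e he
    funext i
    simp only [νf, dif_pos (hF e he i)]
    exact mul_inv_cancel_left _ _
  let Wv : (Fin n → A) → (Fin n → (A ⧸ Cq N) → K) := fun e i q => μ (betaQ N q (νf e i))
  obtain ⟨F₀', hF₀'S, hfin, hspan⟩ := spanSelImage (K := K) Wv F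
  refine ⟨insert c F₀', Set.insert_subset hc hF₀'S, hfin.insert c, ?_⟩
  intro w hw e he
  obtain ⟨m, hm⟩ := key_lemma N μ hμ w c
  -- value of w at any point of the fiber
  have hval : ∀ e' ∈ F, ∃ x : ↥N, phiEval e' w = phiEval c w * (x : A) ∧
      μ x = ∑ i, ∑ q, m i q • Wv e' i q := by
    intro e' he'
    obtain ⟨x, hx1, hx2⟩ := hm (νf e')
    rw [hν e' he'] at hx1
    refine ⟨x, hx1, ?_⟩
    have h2 := hx2 1
    simpa using h2
  -- the linear functional
  let Lm : (Fin n → (A ⧸ Cq N) → K) →ₗ[K] K :=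
  { toFun := fun v => ∑ i, ∑ q, (m i q : K) * v i q
    map_add' := by
      intro u v
      rw [← Finset.sum_add_distrib]
      refine Finset.sum_congr rfl fun i _ => ?_
      rw [← Finset.sum_add_distrib]
      exact Finset.sum_congr rfl fun q _ => by simp [mul_add]
    map_smul' := by
      intro a v
      simp only [RingHom.id_apply, smul_eq_mul, Pi.smul_apply]
      rw [Finset.mul_sum]
      refine Finset.sum_congr rfl fun i _ => ?_
      rw [Finset.mul_sum]
      exact Finset.sum_congr rfl fun q _ => by ring }
  -- μ value equals Lm of the W-vector
  have hμL : ∀ e' (x : ↥N), μ x = ∑ i, ∑ q, m i q • Wv e' i q → μ x = Lm (Wv e') := by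
    intro e' x hx
    rw [hx]
    show _ = ∑ i, ∑ q, (m i q : K) * Wv e' i q
    exact Finset.sum_congr rfl fun i _ => Finset.sum_congr rfl fun q _ => by
      rw [zsmul_eq_mul]
  -- at points of F₀ the value is 1, so Lm vanishes on generators
  have hgen : ∀ e' ∈ F₀', Lm (Wv e') = 0 := by
    intro e' he'
    obtain ⟨x, hx1, hx2⟩ := hval e' (hF₀'S he')
    have h1 : phiEval e' w = 1 := hw e' (Set.mem_insert_of_mem _ he')
    have hcw : phiEval c w = 1 := hw c (Set.mem_insert _ _)
    rw [h1, hcw, one_mul] at hx1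
    have hx1' : x = 1 := Subtype.ext hx1.symm
    have h0 : μ x = 0 := by rw [hx1', hμ1]
    have h2 := hμL e' x hx2
    rw [h0] at h2
    exact h2.symm
  have hker : Submodule.span K (Wv '' F₀') ≤ LinearMap.ker Lm := by
    rw [Submodule.span_le]
    rintro v ⟨e', he', rfl⟩
    exact hgen e' he'
  obtain ⟨x, hx1, hx2⟩ := hval e he
  have hx0 : μ x = 0 := by
    rw [hμL e x hx2]
    exact LinearMap.mem_ker.mp (hker (hspan e he))
  have hx1' : x = 1 := hinj (by rw [hx0, hμ1])
  rw [hx1, hx1', hw c (Set.mem_insert _ _)]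
  simp

end Fiber

/-- A group containing a finite-index subgroup isomorphic to the additive group of a field
is equationally Artinian. -/
theorem virtuallyFieldAdditive_equationallyArtinian (K : Type*) [Field K]
    {A : Type*} [Group A] (H : Subgroup A) [H.FiniteIndex]
    (hiso : Nonempty (H ≃* Multiplicative K)) :
    EquationallyArtinian A := by
  obtain ⟨ι⟩ := hiso
  intro n E
  classical
  set N := H.normalCore with hN
  have hNH : N ≤ H := H.normalCore_le
  haveI : N.Normal := H.normalCore_normal
  haveI : N.FiniteIndex := Subgroup.finiteIndex_normalCore H
  -- the additive coordinate on N
  let μ : ↥N → K := fun x => Multiplicative.toAdd (ι ⟨(x : A), hNH x.2⟩)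
  have hμ : ∀ x y : ↥N, μ (x * y) = μ x + μ y := by
    intro x y
    have h1 : (⟨((x*y : ↥N) : A), hNH (x*y).2⟩ : ↥H)
        = ⟨(x : A), hNH x.2⟩ * ⟨(y : A), hNH y.2⟩ := rfl
    show Multiplicative.toAdd (ι ⟨((x*y : ↥N) : A), hNH (x*y).2⟩) = _
    rw [h1, map_mul]
    rfl
  have hinj : Function.Injective μ := by
    intro x y hxy
    have h1 : (⟨(x : A), hNH x.2⟩ : ↥H) = ⟨(y : A), hNH y.2⟩ :=
      ι.injective (Multiplicative.toAdd.injective hxy)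
    have h2 := Subtype.ext_iff.mp h1
    exact Subtype.ext h2
  -- elements of H act trivially on N by conjugation
  have hHC : H ≤ Cq N := by
    intro h hh
    have hconj : MulAut.conjNormal (H := N) h = 1 := by
      apply MulEquiv.ext
      intro x
      apply Subtype.ext
      have hcomm : h * (x : A) = (x : A) * h := by
        have h2 : (⟨h, hh⟩ * ⟨(x : A), hNH x.2⟩ : ↥H)
            = ⟨(x : A), hNH x.2⟩ * ⟨h, hh⟩ := ι.injective (by rw [map_mul, map_mul, mul_comm])
        have h3 := Subtype.ext_iff.mp h2
        exact h3
      show h * (x : A) * h⁻¹ = (x : A)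
      rw [hcomm, mul_inv_cancel_right]
    simpa [Cq, MonoidHom.mem_ker] using hconj
  haveI : (Cq N).FiniteIndex := Subgroup.finiteIndex_of_le hHC
  letI : Fintype (A ⧸ Cq N) := Fintype.ofFinite _
  -- partition E into fibers over the finite quotient
  let cls : (Fin n → A) → (Fin n → A ⧸ N) := fun e i => QuotientGroup.mk (e i)
  have hfib : ∀ j : Fin n → A ⧸ N,
      ∃ F₀ ⊆ {e ∈ E | cls e = j}, F₀.Finite ∧
        ∀ w, (∀ e ∈ F₀, phiEval e w = 1) → ∀ e ∈ {e ∈ E | cls e = j}, phiEval e w = 1 := by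
    intro j
    by_cases hne : ({e ∈ E | cls e = j} : Set _).Nonempty
    · obtain ⟨c, hcmem⟩ := hne
      have hF : ∀ e ∈ {e ∈ E | cls e = j}, ∀ i, (c i)⁻¹ * e i ∈ N := by
        intro e he i
        have h1 : (QuotientGroup.mk (c i) : A ⧸ N) = j i := congrFun hcmem.2 i
        have h2 : (QuotientGroup.mk (e i) : A ⧸ N) = j i := congrFun he.2 i
        exact (QuotientGroup.eq).mp (h1.trans h2.symm)
      exact fiberSel N μ hμ hinj c _ hcmem hF
    · exact ⟨∅, by simp, Set.finite_empty, fun w _ e he => absurd ⟨e, he⟩ hne⟩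
  choose G hG1 hG2 hG3 using hfib
  have hsubE : (⋃ j, G j) ⊆ E := Set.iUnion_subset fun j => (hG1 j).trans (Set.sep_subset _ _)
  refine ⟨⋃ j, G j, hsubE, Set.finite_iUnion hG2, ?_⟩
  apply Set.Subset.antisymm
  · intro w hw e he
    exact hG3 (cls e) w (fun e' he' => hw e' (Set.mem_iUnion.2 ⟨cls e, he'⟩)) e ⟨he, rfl⟩
  · intro w hw e he
    exact hw e (hsubE he)
end
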